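/- arXiv:1812.09748 — 4 statements merged into one kernel-verified Lean document; each statement's English description precedes it below -/
import Mathlib

section
/- Let f : X → Y be a local homeomorphism between topological spaces, where X is Hausdorff. Suppose the fibers of f over its image have constant finite size, i.e. there exists a natural number n ≥ 1 such that for every y in the range of f the fiber f⁻¹({y}) has exactly n elements. Then f is a covering map onto its image (that is, f is a covering map on the open set range f). -/
/-- **Lemma 8.5** Let `f : X → Y` be a local homeomorphism with `X` Hausdorff.
If the fibers of `f` over its image have constant finite size `n ≥ 1`, then `f` is a
covering map onto its image, i.e. a covering map on the open set `range f`. -/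
theorem local_homeomorph_constant_finite_fibers_isCoveringMapOn
    {X Y : Type*} [TopologicalSpace X] [TopologicalSpace Y] [T2Space X]
    (f : X → Y) (hf : IsLocalHomeomorph f) (n : ℕ) (hn : 1 ≤ n)
    (hfib : ∀ y ∈ Set.range f, (f ⁻¹' {y}).ncard = n) :
    IsCoveringMapOn f (Set.range f) := by
  classical
  have hcont : Continuous f := hf.continuous
  choose e he hfe using hf
  intro y hy
  set F : Set X := f ⁻¹' {y} with hF
  have hFcard : F.ncard = n := hfib y hy
  have hFfin : F.Finite := Set.finite_of_ncard_ne_zero (by omega)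
  have hFne : F.Nonempty := Set.nonempty_of_ncard_ne_zero (by omega)
  haveI : Finite ↥F := hFfin.to_subtype
  haveI : Nonempty ↥F := hFne.to_subtype
  haveI hdisc : DiscreteTopology ↥F := Finite.instDiscreteTopology
  -- pairwise disjoint open neighborhoods of the fiber points
  obtain ⟨U, hU, hUdisj⟩ := hFfin.t2_separation
  -- the restricted charts
  set g : ↥F → OpenPartialHomeomorph X Y :=
    fun x => (e ↑x).restrOpen (U ↑x) (hU ↑x).2 with hg
  have hgsrc : ∀ x : ↥F, (g x).source = (e ↑x).source ∩ U ↑x := fun x =>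
    OpenPartialHomeomorph.restrOpen_source _ _ _
  have hgcoe : ∀ (x : ↥F) (p : X), g x p = f p := fun x p => by
    rw [hfe ↑x]; rfl
  have hxin : ∀ x : ↥F, (x : X) ∈ (g x).source := fun x => by
    rw [hgsrc]; exact ⟨he ↑x, (hU ↑x).1⟩
  -- the evenly covered neighborhood
  set V : Set Y := ⋂ x : ↥F, (g x).target with hV
  have hVopen : IsOpen V := isOpen_iInter_of_finite fun x => (g x).open_target
  have hyV : y ∈ V := by
    refine Set.mem_iInter.2 fun x => ?_
    have := (g x).map_source (hxin x)
    rwa [hgcoe x, x.2] at this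
  have hVsub : ∀ x : ↥F, V ⊆ (g x).target := fun x => Set.iInter_subset _ x
  -- disjointness of the chart sources
  have hsrc_disj : ∀ (x x' : ↥F) (p : X), p ∈ (g x).source → p ∈ (g x').source → x = x' := by
    intro x x' p hp hp'
    by_contra hne
    have hxx' : (x : X) ≠ (x' : X) := fun h => hne (Subtype.ext h)
    exact Set.disjoint_left.1 (hUdisj x.2 x'.2 hxx') ((hgsrc x ▸ hp).2) ((hgsrc x' ▸ hp').2)
  -- over `V`, every preimage point lies in one of the chart sources
  have hkey : ∀ y' ∈ V, ∀ p : X, f p = y' → ∃ x : ↥F, p ∈ (g x).source ∧ p = (g x).symm y' := by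
    intro y' hy' p hp
    set c : ↥F → X := fun x => (g x).symm y' with hc
    have hcsrc : ∀ x, c x ∈ (g x).source := fun x => (g x).map_target (hVsub x hy')
    have hcfib : ∀ x, f (c x) = y' := fun x => by
      rw [← hgcoe x]; exact (g x).right_inv (hVsub x hy')
    have hcinj : Function.Injective c := by
      intro x x' h
      refine hsrc_disj x x' (c x) (hcsrc x) ?_
      rw [h]; exact hcsrc x'
    have hrange : Set.range c ⊆ f ⁻¹' {y'} := by
      rintro _ ⟨x, rfl⟩; exact hcfib x
    have hy'range : y' ∈ Set.range f := ⟨c (Classical.arbitrary _), hcfib _⟩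
    have hfibcard : (f ⁻¹' {y'}).ncard = n := hfib y' hy'range
    have hfibfin : (f ⁻¹' {y'}).Finite := Set.finite_of_ncard_ne_zero (by omega)
    have hrc : (Set.range c).ncard = n := by
      rw [← Set.image_univ, Set.ncard_image_of_injective _ hcinj, Set.ncard_univ,
        Nat.card_coe_set_eq, hFcard]
    have heq : Set.range c = f ⁻¹' {y'} :=
      Set.eq_of_subset_of_ncard_le hrange (by rw [hrc, hfibcard]) hfibfin
    have hpmem : p ∈ Set.range c := heq ▸ hp
    obtain ⟨x, hx⟩ := hpmem
    exact ⟨x, hx ▸ hcsrc x, hx.symm⟩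
  -- the index of the chart containing a point
  set idx : X → ↥F := fun p =>
    if h : ∃ x : ↥F, p ∈ (g x).source then h.choose else Classical.arbitrary _ with hidx
  have hidx_spec : ∀ (p : X) (x : ↥F), p ∈ (g x).source → idx p = x := by
    intro p x hp
    have h : ∃ x : ↥F, p ∈ (g x).source := ⟨x, hp⟩
    rw [hidx]; dsimp only
    rw [dif_pos h]
    exact hsrc_disj _ _ p h.choose_spec hp
  have hidx_mem : ∀ p ∈ f ⁻¹' V, p ∈ (g (idx p)).source := by
    intro p hp
    obtain ⟨x, hx, -⟩ := hkey (f p) hp p rfl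
    rw [hidx_spec p x hx]; exact hx
  -- build the trivialization
  refine IsEvenlyCovered.of_trivialization (I := ↥F) (t := {
    toFun := fun p => (f p, idx p)
    invFun := fun q => (g q.2).symm q.1
    source := f ⁻¹' V
    target := V ×ˢ Set.univ
    map_source' := fun p hp => ⟨hp, Set.mem_univ _⟩
    map_target' := by
      rintro ⟨y', x⟩ ⟨hy', -⟩
      have : f ((g x).symm y') = y' := by
        rw [← hgcoe x]; exact (g x).right_inv (hVsub x hy')
      simpa [this] using hy'
    left_inv' := by
      intro p hp
      obtain ⟨x, hx, hpx⟩ := hkey (f p) hp p rfl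
      dsimp only
      rw [hidx_spec p x hx, ← hpx]
    right_inv' := by
      rintro ⟨y', x⟩ ⟨hy', -⟩
      have h1 : f ((g x).symm y') = y' := by
        rw [← hgcoe x]; exact (g x).right_inv (hVsub x hy')
      have h2 : (g x).symm y' ∈ (g x).source := (g x).map_target (hVsub x hy')
      simp [h1, hidx_spec _ x h2]
    open_source := hVopen.preimage hcont
    open_target := hVopen.prod isOpen_univ
    continuousOn_toFun := by
      refine continuousOn_of_forall_continuousAt fun p hp => ?_
      have hx := hidx_mem p hp
      set x := idx p with hxdef
      have hnb : (g x).source ∩ f ⁻¹' V ∈ nhds p :=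
        (((g x).open_source.inter (hVopen.preimage hcont)).mem_nhds ⟨hx, hp⟩)
      refine ContinuousAt.congr_of_eventuallyEq
        (show ContinuousAt (fun q => (f q, x)) p from (hcont.continuousAt).prodMk continuousAt_const) ?_
      filter_upwards [hnb] with q hq
      rw [hidx_spec q x hq.1]
    continuousOn_invFun := by
      refine continuousOn_of_forall_continuousAt ?_
      rintro ⟨y', x⟩ ⟨hy', -⟩
      have hnb : V ×ˢ ({x} : Set ↥F) ∈ nhds ((y', x) : Y × ↥F) :=
        ((hVopen.prod (isOpen_discrete _)).mem_nhds ⟨hy', rfl⟩)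
      refine ContinuousAt.congr_of_eventuallyEq
        (show ContinuousAt (fun q : Y × ↥F => (g x).symm q.1) ((y', x) : Y × ↥F) from
          (((g x).symm.continuousAt (hVsub x hy')).comp continuousAt_fst)) ?_
      filter_upwards [hnb] with q hq
      rw [hq.2]
    baseSet := V
    open_baseSet := hVopen
    source_eq := rfl
    target_eq := rfl
    proj_toFun := fun p _ => rfl }) hyV
end

section
/- Let f : X → Y be a local homeomorphism between topological spaces with X Hausdorff, let N be a natural number, and let D ⊆ Y be a dense subset such that for every d ∈ D the fiber f⁻¹({d}) has at most N elements. Then for every y ∈ Y the fiber f⁻¹({y}) has at most N elements. -/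
lemma fin_embed_iff_card_le {α : Type*} (n : ℕ) :
    ((n : Cardinal) ≤ Cardinal.mk α) ↔ Nonempty (Fin n ↪ α) := by
  simp [← Cardinal.lift_mk_le', Cardinal.mk_fin]

/-- Semicontinuity of fiber size for local homeomorphisms with Hausdorff source:
if `f : X → Y` is a local homeomorphism, `X` is Hausdorff, and the fibers of `f` over a
dense subset `D ⊆ Y` have at most `N` elements, then every fiber of `f` has at most `N`
elements. -/
theorem local_homeomorph_fiber_card_le_of_dense
    {X Y : Type*} [TopologicalSpace X] [TopologicalSpace Y] [T2Space X]
    (f : X → Y) (hf : IsLocalHomeomorph f) (N : ℕ) (D : Set Y) (hD : Dense D)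
    (hfib : ∀ d ∈ D, Cardinal.mk ↥(f ⁻¹' {d}) ≤ (N : Cardinal)) :
    ∀ y : Y, Cardinal.mk ↥(f ⁻¹' {y}) ≤ (N : Cardinal) := by
  intro y
  by_contra hlt
  push_neg at hlt
  have hsucc : ((N + 1 : ℕ) : Cardinal) ≤ Cardinal.mk ↥(f ⁻¹' {y}) := by
    rw [Cardinal.nat_succ]
    exact Order.succ_le_of_lt hlt
  obtain ⟨g⟩ := (fin_embed_iff_card_le (N + 1)).mp hsucc
  set p : Fin (N + 1) → X := fun i => (g i : X) with hp
  have hpy : ∀ i, f (p i) = y := fun i => (g i).2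
  have hpinj : Function.Injective p := fun i j h => g.injective (Subtype.ext h)
  -- disjoint open neighborhoods
  obtain ⟨U, hU, hUdisj⟩ := (Set.finite_range p).t2_separation
  -- charts
  choose e he hfe using fun i => hf (p i)
  set W : Fin (N + 1) → Set X := fun i => (e i).source ∩ U (p i) with hW
  have hWopen : ∀ i, IsOpen (W i) := fun i =>
    (e i).open_source.inter (hU (p i)).2
  have hWmem : ∀ i, p i ∈ W i := fun i => ⟨he i, (hU (p i)).1⟩
  have hWimg : ∀ i, IsOpen (f '' W i) := by
    intro i
    rw [hfe i]
    exact (e i).isOpen_image_of_subset_source (hWopen i) Set.inter_subset_left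
  have hVopen : IsOpen (⋂ i, f '' W i) := isOpen_iInter_of_finite hWimg
  have hyV : y ∈ ⋂ i, f '' W i := Set.mem_iInter.2 fun i => ⟨p i, hWmem i, hpy i⟩
  obtain ⟨d, hdD, hdV⟩ := hD.exists_mem_open hVopen ⟨y, hyV⟩
  rw [Set.mem_iInter] at hdV
  choose z hzW hzd using hdV
  have hzinj : Function.Injective z := by
    intro i j hij
    by_contra hne
    have hpij : p i ≠ p j := fun h => hne (hpinj h)
    have := hUdisj (Set.mem_range_self i) (Set.mem_range_self j) hpij
    exact (this.ne_of_mem (hzW i).2 (hij ▸ (hzW j).2)) rfl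
  have : ((N + 1 : ℕ) : Cardinal) ≤ Cardinal.mk ↥(f ⁻¹' {d}) := by
    exact (fin_embed_iff_card_le (N + 1)).mpr ⟨⟨fun i => ⟨z i, hzd i⟩, fun i j h =>
      hzinj (congrArg Subtype.val h)⟩⟩
  have := this.trans (hfib d hdD)
  rw [Nat.cast_le] at this
  omega
end

section
/- Let G be a group acting by homeomorphisms on topological spaces X and Y, with X Hausdorff, and let f : X → Y be a G-equivariant local homeomorphism. Suppose that every G-orbit in Y is dense in Y and that some fiber of f is finite. Then all fibers of f are finite and have the same cardinality. -/
/-- Semicontinuity: if a fiber of a local homeomorphism (with Hausdorff source)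
contains `k` distinct points, then so do all nearby fibers. -/
private lemma fiber_lower_aux {X Y : Type*} [TopologicalSpace X] [TopologicalSpace Y] [T2Space X]
    {f : X → Y} (hf : IsLocalHomeomorph f) {k : ℕ} {y : Y}
    (s : Fin k → X) (hs : Function.Injective s) (hsy : ∀ i, f (s i) = y) :
    ∃ V : Set Y, IsOpen V ∧ y ∈ V ∧
      ∀ y' ∈ V, ∃ t : Fin k → X, Function.Injective t ∧ ∀ i, f (t i) = y' := by
  obtain ⟨W, hW, hWd⟩ := (Set.finite_range s).t2_separation
  choose e he hfe using fun i => hf (s i)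
  set U : Fin k → Set X := fun i => (e i).source ∩ W (s i) with hU
  have hUsub : ∀ i, U i ⊆ (e i).source := fun i => Set.inter_subset_left
  have hUopen : ∀ i, IsOpen ((e i) '' U i) := fun i =>
    (e i).isOpen_image_of_subset_source
      ((e i).open_source.inter (hW (s i)).2) (hUsub i)
  refine ⟨⋂ i, (e i) '' U i, isOpen_iInter_of_finite hUopen, ?_, ?_⟩
  · refine Set.mem_iInter.2 fun i => ⟨s i, ⟨he i, (hW (s i)).1⟩, ?_⟩
    rw [← hsy i, hfe i]
  · intro y' hy'
    have hy'' : ∀ i, ∃ x, x ∈ U i ∧ (e i) x = y' := fun i => Set.mem_iInter.1 hy' i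
    choose t ht het using hy''
    refine ⟨t, ?_, fun i => by rw [hfe i]; exact het i⟩
    intro i j hij
    by_contra hne
    have hd : Disjoint (W (s i)) (W (s j)) :=
      hWd (Set.mem_range_self i) (Set.mem_range_self j) (fun h => hne (hs h))
    exact hd.ne_of_mem (ht i).2 (ht j).2 hij

/-- If a set is infinite, or finite of cardinality at least `k`, it admits an injection
from `Fin k`. -/
private lemma exists_inj_of_infinite_or_le {α : Type*} {s : Set α} {k : ℕ}
    (h : s.Infinite ∨ (s.Finite ∧ k ≤ s.ncard)) :
    ∃ t : Fin k → α, Function.Injective t ∧ ∀ i, t i ∈ s := by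
  rcases h with h | ⟨hfin, hk⟩
  · let emb := h.natEmbedding
    refine ⟨fun i => (emb i.1 : α), ?_, fun i => (emb i.1).2⟩
    intro i j hij
    exact Fin.val_injective (emb.injective (Subtype.coe_injective hij))
  · classical
    set F := hfin.toFinset with hF
    have hcard : k ≤ F.card := by
      rwa [← Set.ncard_eq_toFinset_card s hfin]
    refine ⟨fun i => (F.equivFin.symm (Fin.castLE hcard i) : α), ?_, fun i => ?_⟩
    · intro i j hij
      have : F.equivFin.symm (Fin.castLE hcard i) = F.equivFin.symm (Fin.castLE hcard j) :=
        Subtype.coe_injective hij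
      have := F.equivFin.symm.injective this
      exact Fin.castLE_injective hcard this
    · exact hfin.mem_toFinset.mp (F.equivFin.symm (Fin.castLE hcard i)).2

/-- The range of an injection from `Fin k` has `ncard` equal to `k`. -/
private lemma ncard_range_fin {α : Type*} {k : ℕ} {t : Fin k → α}
    (ht : Function.Injective t) : (Set.range t).ncard = k := by
  rw [← Set.image_univ, Set.ncard_image_of_injective _ ht, Set.ncard_univ,
    Nat.card_eq_fintype_card, Fintype.card_fin]

/-- Let `G` act by homeomorphisms on `X` and `Y`, with `X` Hausdorff, and let
`f : X → Y` be a `G`-equivariant local homeomorphism. If every `G`-orbit in `Y` is dense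
and some fiber of `f` is finite, then all fibers of `f` are finite of the same
cardinality. -/
theorem equivariant_local_homeomorph_fibers_finite_constant
    {G X Y : Type*} [Group G] [TopologicalSpace X] [TopologicalSpace Y] [T2Space X]
    [MulAction G X] [MulAction G Y]
    [ContinuousConstSMul G X] [ContinuousConstSMul G Y]
    (f : X → Y) (hf : IsLocalHomeomorph f)
    (hequiv : ∀ (g : G) (x : X), f (g • x) = g • f x)
    (horb : ∀ y : Y, Dense (MulAction.orbit G y : Set Y))
    (hfin : ∃ y : Y, (f ⁻¹' {y}).Finite) :
    (∀ y : Y, (f ⁻¹' {y}).Finite) ∧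
      ∀ y₁ y₂ : Y, (f ⁻¹' {y₁}).ncard = (f ⁻¹' {y₂}).ncard := by
  -- Fibers along an orbit are related by the group action.
  have fiber_smul : ∀ (g : G) (y : Y), f ⁻¹' {g • y} = (g • ·) '' (f ⁻¹' {y}) := by
    intro g y
    ext x
    simp only [Set.mem_preimage, Set.mem_singleton_iff, Set.mem_image]
    constructor
    · intro h
      refine ⟨g⁻¹ • x, ?_, by simp⟩
      rw [hequiv, h, inv_smul_smul]
    · rintro ⟨z, hz, rfl⟩
      rw [hequiv, hz]
  obtain ⟨y₀, h₀⟩ := hfin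
  set n := (f ⁻¹' {y₀}).ncard with hn
  -- No fiber contains `n + 1` distinct points.
  have hno : ∀ y : Y, ¬ ∃ t : Fin (n + 1) → X, Function.Injective t ∧ ∀ i, f (t i) = y := by
    rintro y ⟨t, ht, hty⟩
    obtain ⟨V, hVo, hyV, hV⟩ := fiber_lower_aux hf t ht hty
    obtain ⟨z, hz, hzV⟩ := (horb y₀).exists_mem_open hVo ⟨y, hyV⟩
    rcases hz with ⟨g, rfl⟩
    obtain ⟨u, hu, huz⟩ := hV _ hzV
    have hfinz : (f ⁻¹' {g • y₀}).Finite := by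
      rw [fiber_smul]; exact h₀.image _
    have hcard : (f ⁻¹' {g • y₀}).ncard = n := by
      rw [fiber_smul, Set.ncard_image_of_injective _ (MulAction.injective g)]
    have hsub : Set.range u ⊆ f ⁻¹' {g • y₀} := by
      rintro _ ⟨i, rfl⟩
      exact huz i
    have h1 : (Set.range u).ncard = n + 1 := ncard_range_fin hu
    have h2 := Set.ncard_le_ncard hsub hfinz
    omega
  -- Hence all fibers are finite with at most `n` elements.
  have hfinall : ∀ y : Y, (f ⁻¹' {y}).Finite := by
    intro y
    by_contra h
    obtain ⟨t, ht, hty⟩ := exists_inj_of_infinite_or_le (k := n + 1) (Or.inl h)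
    exact hno y ⟨t, ht, fun i => hty i⟩
  have hle : ∀ y : Y, (f ⁻¹' {y}).ncard ≤ n := by
    intro y
    by_contra h
    push_neg at h
    obtain ⟨t, ht, hty⟩ := exists_inj_of_infinite_or_le (k := n + 1) (Or.inr ⟨hfinall y, h⟩)
    exact hno y ⟨t, ht, fun i => hty i⟩
  -- And all fibers have at least `n` elements.
  have hge : ∀ y : Y, n ≤ (f ⁻¹' {y}).ncard := by
    intro y
    obtain ⟨s, hs, hs0⟩ := exists_inj_of_infinite_or_le (k := n) (Or.inr ⟨h₀, le_refl n⟩)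
    obtain ⟨V, hVo, hyV, hV⟩ := fiber_lower_aux hf s hs (fun i => hs0 i)
    obtain ⟨z, hz, hzV⟩ := (horb y).exists_mem_open hVo ⟨y₀, hyV⟩
    rcases hz with ⟨g, rfl⟩
    obtain ⟨u, hu, huz⟩ := hV _ hzV
    have hfinz : (f ⁻¹' {g • y}).Finite := by
      rw [fiber_smul]; exact (hfinall y).image _
    have hsub : Set.range u ⊆ f ⁻¹' {g • y} := by
      rintro _ ⟨i, rfl⟩
      exact huz i
    have h1 : (Set.range u).ncard = n := ncard_range_fin hu
    have h2 := Set.ncard_le_ncard hsub hfinz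
    have hcard : (f ⁻¹' {g • y}).ncard = (f ⁻¹' {y}).ncard := by
      rw [fiber_smul, Set.ncard_image_of_injective _ (MulAction.injective g)]
    omega
  refine ⟨hfinall, fun y₁ y₂ => ?_⟩
  have e₁ := le_antisymm (hle y₁) (hge y₁)
  have e₂ := le_antisymm (hle y₂) (hge y₂)
  rw [e₁, e₂]
end

section
/- Let V be a complex vector space of finite dimension m ≥ 3 equipped with a nondegenerate quadratic form q, and let k be a natural number. Let P : V → ℂ be a homogeneous polynomial function of degree k (i.e. given by a homogeneous degree-k polynomial in linear coordinates on V) which is invariant under the special orthogonal group of q, that is, P(g·v) = P(v) for every linear automorphism g of V preserving q with determinant 1 and every v ∈ V. Then: if k is odd, P = 0; and if k is even, there exists a constant c ∈ ℂ such that P(v) = c · q(v)^{k/2} for all v ∈ V. -/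
open QuadraticMap Polynomial

section SOAux

variable {V : Type*} [AddCommGroup V] [Module ℂ V]
variable (q : QuadraticForm ℂ V)

private lemma q_apply_add' (x y : V) : q (x + y) = q x + q y + polar q x y := by
  simp [QuadraticMap.polar]

private lemma polar_self_eq' (w : V) : polar q w w = 2 * q w := by
  rw [polar_self]; push_cast [two_smul]; ring

private lemma refl_fun_apply_self (w : V) (hw : q w ≠ 0) :
    ((q w)⁻¹ • (q.polarBilin w)) w = 2 := by
  simp only [LinearMap.smul_apply, QuadraticMap.polarBilin_apply_apply, polar_self,
    smul_eq_mul, two_smul]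
  field_simp
  ring

private noncomputable def qrefl (w : V) (hw : q w ≠ 0) : V ≃ₗ[ℂ] V :=
  Module.reflection (refl_fun_apply_self q w hw)

private lemma qrefl_apply (w : V) (hw : q w ≠ 0) (v : V) :
    qrefl q w hw v = v - ((q w)⁻¹ * polar q w v) • w := by
  simp [qrefl, Module.reflection_apply, smul_eq_mul]

private lemma qrefl_isometry (w : V) (hw : q w ≠ 0) (v : V) :
    q (qrefl q w hw v) = q v := by
  rw [qrefl_apply, sub_eq_add_neg, ← neg_smul, q_apply_add', QuadraticMap.map_smul,
    polar_smul_right, polar_comm q v w]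
  simp only [smul_eq_mul]
  field_simp
  ring

private lemma qrefl_det [FiniteDimensional ℂ V] (w : V) (hw : q w ≠ 0) :
    LinearMap.det (qrefl q w hw : V →ₗ[ℂ] V) = -1 := by
  classical
  set f : V →ₗ[ℂ] ℂ := (q w)⁻¹ • (q.polarBilin w) with hf
  have hfw : f w = 2 := refl_fun_apply_self q w hw
  let b := Module.finBasis ℂ V
  have hM : LinearMap.toMatrix b b (qrefl q w hw : V →ₗ[ℂ] V)
      = 1 + Matrix.replicateCol Unit (fun i => - b.repr w i) * Matrix.replicateRow Unit (fun j => f (b j)) := by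
    ext i j
    have : (qrefl q w hw : V →ₗ[ℂ] V) (b j) = b j - f (b j) • w := by
      rw [LinearEquiv.coe_coe, qrefl_apply]
      simp [hf, smul_eq_mul]
    simp only [LinearMap.toMatrix_apply, this, _root_.map_sub, _root_.map_smul,
      Finsupp.coe_sub, Finsupp.coe_smul, Pi.sub_apply, Pi.smul_apply, Module.Basis.repr_self,
      smul_eq_mul, Matrix.add_apply, Matrix.one_apply, Matrix.mul_apply, Matrix.replicateCol_apply,
      Matrix.replicateRow_apply, Finset.univ_unique, Finset.sum_const, Finset.card_singleton,
      one_smul, Finsupp.single_apply]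
    rw [if_congr (Iff.intro Eq.symm Eq.symm) rfl rfl]
    ring
  rw [← LinearMap.det_toMatrix b, hM, Matrix.det_one_add_replicateCol_mul_replicateRow]
  have : dotProduct (fun j => f (b j)) (fun i => - b.repr w i) = - f w := by
    rw [dotProduct]
    rw [show f w = f (∑ i, b.repr w i • b i) by rw [Module.Basis.sum_repr]]
    rw [map_sum, ← Finset.sum_neg_distrib]
    exact Finset.sum_congr rfl fun i _ => by simp [smul_eq_mul]; ring
  rw [this, hfw]
  norm_num

private lemma exists_orth [FiniteDimensional ℂ V] (hdim : 3 ≤ Module.finrank ℂ V)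
    (hq : LinearMap.BilinForm.Nondegenerate q.polarBilin)
    (v : V) (hv : q v ≠ 0) : ∃ w : V, polar q v w = 0 ∧ q w ≠ 0 := by
  classical
  have hKrank : 0 < Module.rank ℂ (LinearMap.ker (q.polarBilin v)) := by
    rw [← Module.finrank_eq_rank]
    norm_cast
    have h1 := LinearMap.finrank_range_add_finrank_ker (q.polarBilin v)
    have h2 : Module.finrank ℂ (LinearMap.range (q.polarBilin v)) ≤ 1 := by
      have := Submodule.finrank_le (LinearMap.range (q.polarBilin v))
      simpa [Module.finrank_self] using this
    omega
  obtain ⟨w₀, hw₀K, hw₀ne⟩ := exists_mem_ne_zero_of_rank_pos hKrank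
  by_contra hcon
  push_neg at hcon
  have hiso : ∀ x, x ∈ LinearMap.ker (q.polarBilin v) → q x = 0 := by
    intro x hx
    by_contra hqx
    exact hqx (hcon x (by simpa using hx))
  have hK2 : ∀ x y, x ∈ LinearMap.ker (q.polarBilin v) → y ∈ LinearMap.ker (q.polarBilin v) →
      polar q x y = 0 := by
    intro x y hx hy
    have hxy : x + y ∈ LinearMap.ker (q.polarBilin v) := add_mem hx hy
    have : polar q x y = q (x + y) - q x - q y := rfl
    rw [this, hiso _ hx, hiso _ hy, hiso _ hxy]
    ring
  apply hw₀ne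
  apply hq.1 w₀
  intro z
  have hvw₀ : polar q v w₀ = 0 := by simpa using hw₀K
  have hdecomp : z - ((2 * q v)⁻¹ * polar q v z) • v ∈ LinearMap.ker (q.polarBilin v) := by
    rw [LinearMap.mem_ker, QuadraticMap.polarBilin_apply_apply, polar_sub_right,
      polar_smul_right, polar_self_eq']
    simp only [smul_eq_mul]
    field_simp
    ring
  have hzdec : z = (z - ((2 * q v)⁻¹ * polar q v z) • v) + ((2 * q v)⁻¹ * polar q v z) • v := by
    abel
  rw [QuadraticMap.polarBilin_apply_apply, hzdec]
  rw [polar_add_right, polar_smul_right, polar_comm q w₀ v, hvw₀,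
    hK2 _ _ (by simpa using hw₀K) hdecomp]
  simp

/-- transitivity of `SO(q)` on nonzero level sets of `q`. -/
private lemma exists_SO [FiniteDimensional ℂ V] (hdim : 3 ≤ Module.finrank ℂ V)
    (hq : LinearMap.BilinForm.Nondegenerate q.polarBilin)
    (u v : V) (hu : q u ≠ 0) (huv : q u = q v) :
    ∃ g : V ≃ₗ[ℂ] V, (∀ x, q (g x) = q x) ∧
      LinearMap.det (g : V →ₗ[ℂ] V) = 1 ∧ g u = v := by
  classical
  have hv : q v ≠ 0 := huv ▸ hu
  have hqneg : q (u - v) = 2 * q u - polar q u v := by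
    rw [sub_eq_add_neg, q_apply_add', ← neg_one_smul ℂ v, QuadraticMap.map_smul,
      polar_smul_right, huv]
    simp only [smul_eq_mul]
    ring
  have hqpos : q (u + v) = 2 * q u + polar q u v := by
    rw [q_apply_add', huv]; ring
  by_cases h2 : q (u + v) ≠ 0
  · -- two reflections: r_v ∘ r_{u+v}
    refine ⟨(qrefl q (u + v) h2).trans (qrefl q v hv), fun x => ?_, ?_, ?_⟩
    · simp [qrefl_isometry]
    · rw [show ((qrefl q (u + v) h2).trans (qrefl q v hv) : V →ₗ[ℂ] V)
          = (qrefl q v hv : V →ₗ[ℂ] V) ∘ₗ (qrefl q (u + v) h2 : V →ₗ[ℂ] V) from rfl,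
        LinearMap.det_comp, qrefl_det, qrefl_det]
      ring
    · have hstep1 : qrefl q (u + v) h2 u = -v := by
        rw [qrefl_apply]
        have : polar q (u + v) u = q (u + v) := by
          rw [polar_comm, polar_add_right, polar_self_eq', hqpos]
        rw [this, mul_comm, mul_inv_cancel₀ h2]
        simp only [one_smul]
        abel
      have hstep2 : qrefl q v hv (-v) = v := by
        rw [qrefl_apply, ← neg_one_smul ℂ v, polar_smul_right, polar_self_eq']
        simp only [smul_eq_mul]
        rw [show (q v)⁻¹ * (-1 * (2 * q v)) = -2 by field_simp]
        rw [neg_one_smul]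
        module
      simp [LinearEquiv.trans_apply, hstep1, hstep2]
  · -- one reflection moving u to v, another fixing v
    push_neg at h2
    have h1 : q (u - v) ≠ 0 := by
      intro h1
      rw [hqpos] at h2
      rw [hqneg] at h1
      apply hu
      have : (4 : ℂ) * q u = 0 := by linear_combination h1 + h2
      simpa using this
    obtain ⟨w, hwo, hw⟩ := exists_orth q hdim hq v hv
    refine ⟨(qrefl q (u - v) h1).trans (qrefl q w hw), fun x => ?_, ?_, ?_⟩
    · simp [qrefl_isometry]
    · rw [show ((qrefl q (u - v) h1).trans (qrefl q w hw) : V →ₗ[ℂ] V)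
          = (qrefl q w hw : V →ₗ[ℂ] V) ∘ₗ (qrefl q (u - v) h1 : V →ₗ[ℂ] V) from rfl,
        LinearMap.det_comp, qrefl_det, qrefl_det]
      ring
    · have hstep1 : qrefl q (u - v) h1 u = v := by
        rw [qrefl_apply]
        have : polar q (u - v) u = q (u - v) := by
          rw [polar_comm, polar_sub_right, polar_self_eq', hqneg, polar_comm q u v]
        rw [this, mul_comm, mul_inv_cancel₀ h1]
        simp only [one_smul]
        abel
      have hstep2 : qrefl q w hw v = v := by
        rw [qrefl_apply, polar_comm, hwo]
        simp
      simp [LinearEquiv.trans_apply, hstep1, hstep2]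

/-- Existence of a vector of `q`-value one. -/
private lemma exists_q_one [FiniteDimensional ℂ V] (hdim : 3 ≤ Module.finrank ℂ V)
    (hq : LinearMap.BilinForm.Nondegenerate q.polarBilin) :
    ∃ v : V, q v = 1 := by
  have hnontriv : Nontrivial V := by
    have : 0 < Module.finrank ℂ V := by omega
    exact Module.nontrivial_of_finrank_pos this
  obtain ⟨x, hx⟩ := exists_ne (0 : V)
  have : ∃ u : V, q u ≠ 0 := by
    by_contra hcon
    push_neg at hcon
    apply hx
    apply hq.1 x
    intro y
    rw [QuadraticMap.polarBilin_apply_apply]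
    have : polar q x y = q (x + y) - q x - q y := rfl
    rw [this, hcon, hcon, hcon]
    ring
  obtain ⟨u, hu⟩ := this
  obtain ⟨s, hs⟩ := IsAlgClosed.exists_pow_nat_eq (k := ℂ) (q u)⁻¹ (n := 2) (by norm_num)
  refine ⟨s • u, ?_⟩
  rw [QuadraticMap.map_smul, smul_eq_mul]
  have hss : s * s = (q u)⁻¹ := by rw [← hs]; ring
  rw [hss]
  field_simp

/-- polynomial representation of a multilinear map along a line. -/
private lemma exists_line_poly {k : ℕ} (T : MultilinearMap ℂ (fun _ : Fin k => V) ℂ)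
    (v w : V) : ∃ p : Polynomial ℂ, ∀ t : ℂ, T (fun _ => v + t • w) = p.eval t := by
  classical
  refine ⟨∑ s : Finset (Fin k),
    Polynomial.C (T (s.piecewise (fun _ => v) (fun _ => w))) * Polynomial.X ^ (sᶜ.card), ?_⟩
  intro t
  have h1 : (fun _ : Fin k => v + t • w) = (fun _ : Fin k => v) + (fun _ : Fin k => t • w) := rfl
  rw [h1, T.map_add_univ]
  rw [eval_finset_sum]
  refine Finset.sum_congr rfl fun s _ => ?_
  have h2 : s.piecewise (fun _ : Fin k => v) (fun _ : Fin k => t • w)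
      = sᶜ.piecewise (fun i => t • (s.piecewise (fun _ : Fin k => v) (fun _ : Fin k => w)) i)
          (s.piecewise (fun _ : Fin k => v) (fun _ : Fin k => w)) := by
    funext i
    by_cases hi : i ∈ s <;> simp [Finset.piecewise, hi]
  rw [h2, T.map_piecewise_smul]
  simp only [Finset.prod_const, smul_eq_mul, Polynomial.eval_mul, Polynomial.eval_C,
    Polynomial.eval_pow, Polynomial.eval_X]
  ring

/-- the extension lemma: an identity valid off the quadric extends everywhere. -/
private lemma ext_off_quadric [FiniteDimensional ℂ V] (hdim : 3 ≤ Module.finrank ℂ V)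
    (hq : LinearMap.BilinForm.Nondegenerate q.polarBilin)
    {k : ℕ} (T : MultilinearMap ℂ (fun _ : Fin k => V) ℂ) (c : ℂ) (m : ℕ)
    (h : ∀ v : V, q v ≠ 0 → T (fun _ => v) = c * q v ^ m) :
    ∀ v : V, T (fun _ => v) = c * q v ^ m := by
  classical
  intro v
  by_cases hv : q v ≠ 0
  · exact h v hv
  push_neg at hv
  obtain ⟨w, hw⟩ : ∃ w : V, polar q v w ≠ 0 ∨ q w ≠ 0 := by
    by_cases h0 : v = 0
    · obtain ⟨u, hu1⟩ := exists_q_one q hdim hq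
      exact ⟨u, Or.inr (by rw [hu1]; norm_num)⟩
    · by_contra hcon
      push_neg at hcon
      exact h0 (hq.1 v fun z => by
        rw [QuadraticMap.polarBilin_apply_apply]; exact (hcon z).1)
  obtain ⟨pP, hpP⟩ := exists_line_poly T v w
  set pq : Polynomial ℂ := Polynomial.C (polar q v w) * Polynomial.X
    + Polynomial.C (q w) * Polynomial.X ^ 2 with hpqdef
  have hq_eval : ∀ t : ℂ, q (v + t • w) = pq.eval t := by
    intro t
    rw [q_apply_add', QuadraticMap.map_smul, polar_smul_right, hv]
    simp only [hpqdef, Polynomial.eval_add, Polynomial.eval_mul, Polynomial.eval_C,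
      Polynomial.eval_X, Polynomial.eval_pow, smul_eq_mul]
    ring
  have hpq_ne : pq ≠ 0 := by
    intro hz
    rcases hw with hw | hw
    · apply hw
      have := congrArg (fun p => Polynomial.coeff p 1) hz
      simpa [hpqdef, Polynomial.coeff_X, Polynomial.coeff_X_pow] using this
    · apply hw
      have := congrArg (fun p => Polynomial.coeff p 2) hz
      simpa [hpqdef, Polynomial.coeff_X, Polynomial.coeff_X_pow] using this
  set p : Polynomial ℂ := pP - Polynomial.C c * pq ^ m with hpdef
  have hp0 : p = 0 := by
    apply Polynomial.eq_zero_of_infinite_isRoot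
    apply Set.Infinite.mono (s := {t : ℂ | ¬ pq.IsRoot t})
    · intro t ht
      have hqt : q (v + t • w) ≠ 0 := by rw [hq_eval]; exact ht
      have := h (v + t • w) hqt
      rw [hpP t, hq_eval t] at this
      simp only [Set.mem_setOf_eq, Polynomial.IsRoot, hpdef]
      simp [this]
    · have hfin : {t : ℂ | pq.IsRoot t}.Finite := Polynomial.finite_setOf_isRoot hpq_ne
      exact hfin.infinite_compl
  have := congrArg (fun p => Polynomial.eval 0 p) hp0
  simp only [hpdef, Polynomial.eval_sub, Polynomial.eval_mul, Polynomial.eval_C,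
    Polynomial.eval_pow, Polynomial.eval_zero] at this
  rw [← hpP 0, ← hq_eval 0] at this
  simp only [zero_smul, add_zero] at this
  linear_combination this
end SOAux

/-- Invariant theory of `SO(q)` on one vector: let `V` be a complex vector space of
finite dimension `≥ 3` with a nondegenerate quadratic form `q`, and let `P : V → ℂ` be a
homogeneous polynomial function of degree `k` (i.e. `P v = T (v, …, v)` for some
`k`-multilinear form `T`) which is invariant under every linear automorphism of `V`
preserving `q` and of determinant `1`. If `k` is odd then `P = 0`; if `k` is even then
`P = c · q^{k/2}` for some constant `c ∈ ℂ`. -/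
theorem so_invariant_polynomial_eq_power_of_quadratic_form
    {V : Type*} [AddCommGroup V] [Module ℂ V] [FiniteDimensional ℂ V]
    (hdim : 3 ≤ Module.finrank ℂ V)
    (q : QuadraticForm ℂ V) (hq : LinearMap.BilinForm.Nondegenerate q.polarBilin)
    (k : ℕ) (P : V → ℂ)
    (hP : ∃ T : MultilinearMap ℂ (fun _ : Fin k => V) ℂ, ∀ v : V, P v = T (fun _ => v))
    (hinv : ∀ g : V ≃ₗ[ℂ] V, (∀ v : V, q (g v) = q v) →
      LinearMap.det (g : V →ₗ[ℂ] V) = 1 → ∀ v : V, P (g v) = P v) :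
    (Odd k → ∀ v : V, P v = 0) ∧
      (Even k → ∃ c : ℂ, ∀ v : V, P v = c * (q v) ^ (k / 2)) := by
  classical
  obtain ⟨T, hT⟩ := hP
  constructor
  · intro hk v
    have hoff : ∀ u : V, q u ≠ 0 → T (fun _ => u) = 0 * q u ^ 0 := by
      intro u hu
      have hvneg : q u = q ((-1 : ℂ) • u) := by rw [QuadraticMap.map_smul]; simp
      obtain ⟨g, hgiso, hgdet, hgu⟩ := exists_SO q hdim hq u ((-1 : ℂ) • u) hu hvneg
      have h1 : P ((-1 : ℂ) • u) = P u := by rw [← hgu]; exact hinv g hgiso hgdet u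
      have h2 : P ((-1 : ℂ) • u) = - P u := by
        rw [hT, hT]
        have heq : (fun _ : Fin k => (-1 : ℂ) • u)
            = fun i : Fin k => (-1 : ℂ) • (fun _ : Fin k => u) i := rfl
        rw [heq, T.map_smul_univ]
        simp [Finset.prod_const, hk.neg_one_pow]
      have h3 : P u = 0 := by
        have := h1.symm.trans h2
        linear_combination this / 2
      rw [← hT, h3]
      ring
    have := ext_off_quadric q hdim hq T 0 0 hoff v
    rw [hT, this]
    ring
  · intro hk
    obtain ⟨v₀, hv₀⟩ := exists_q_one q hdim hq
    refine ⟨P v₀, fun v => ?_⟩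
    have hoff : ∀ u : V, q u ≠ 0 → T (fun _ => u) = P v₀ * q u ^ (k / 2) := by
      intro u hu
      obtain ⟨t, ht⟩ := IsAlgClosed.exists_pow_nat_eq (k := ℂ) (q u) (n := 2) (by norm_num)
      have hqt : q (t • v₀) = q u := by
        rw [QuadraticMap.map_smul, hv₀, smul_eq_mul, ← ht]; ring
      have hne : q (t • v₀) ≠ 0 := by rw [hqt]; exact hu
      obtain ⟨g, hgiso, hgdet, hgu⟩ := exists_SO q hdim hq (t • v₀) u hne hqt
      have h1 : P u = P (t • v₀) := by rw [← hgu]; exact hinv g hgiso hgdet _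
      have h2 : P (t • v₀) = t ^ k * P v₀ := by
        rw [hT, hT]
        have heq : (fun _ : Fin k => t • v₀)
            = fun i : Fin k => t • (fun _ : Fin k => v₀) i := rfl
        rw [heq, T.map_smul_univ]
        simp [Finset.prod_const]
      have htk : t ^ k = q u ^ (k / 2) := by
        conv_lhs => rw [← Nat.mul_div_cancel' hk.two_dvd]
        rw [pow_mul, ht]
      rw [← hT, h1, h2, htk]
      ring
    rw [hT]
    exact ext_off_quadric q hdim hq T (P v₀) (k / 2) hoff v
end
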